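/- Negative shift removal: for every negative proposition A⁻ with erasure (A⁻)• = P, there exists a negative proposition B⁻, not of the form ↑↓C⁻, such that (B⁻)• = P and, for every context Γ and stable succedent U, derivability of Γ, B⁻ ; · ⊢ U implies derivability of Γ, A⁻ ; · ⊢ U in the focused sequent calculus for polarized intuitionistic logic. -/

import Mathlib

namespace StructuralFocalization

/- Polarized propositional intuitionistic logic -/
mutual
inductive PProp : Type
  | atom : Nat → PProp
  | down : NProp → PProp
  | bot  : PProp
  | or   : PProp → PProp → PProp
  | top  : PProp
  | and  : PProp → PProp → PProp
inductive NProp : Type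
  | atom : Nat → NProp
  | up   : PProp → NProp
  | imp  : PProp → NProp → NProp
  | top  : NProp
  | and  : NProp → NProp → NProp
end

/- Hypotheses: negative propositions or suspended positives ⟨A⁺⟩ -/
inductive Hyp : Type
  | neg  : NProp → Hyp
  | susp : PProp → Hyp

/- Succedents: A⁺, A⁻, or suspended ⟨A⁻⟩ -/
inductive Succ : Type
  | pos  : PProp → Succ
  | neg  : NProp → Succ
  | susp : NProp → Succ

abbrev Ctx := List Hyp

def Succ.stable : Succ → Prop
  | .pos _ => True
  | .susp _ => True
  | .neg _ => False

def Hyp.suspNormal : Hyp → Prop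
  | .susp (PProp.atom _) => True
  | .susp _ => False
  | .neg _ => True

def Ctx.suspNormal (Γ : Ctx) : Prop := ∀ h ∈ Γ, h.suspNormal

def Succ.suspNormal : Succ → Prop
  | .susp (NProp.atom _) => True
  | .susp _ => False
  | _ => True

/- The focused sequent calculus (Figures 3 and 4 of "Structural focalization",
   with the generalized id⁺/id⁻ rules for arbitrary suspended propositions). -/
mutual
/-- Right focus: Γ ⊢ [A⁺] -/
inductive RFoc : Ctx → PProp → Prop
  | idP {Γ A} : Hyp.susp A ∈ Γ → RFoc Γ A
  | downR {Γ A} : Inv Γ [] (Succ.neg A) → RFoc Γ (PProp.down A)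
  | orR1 {Γ A B} : RFoc Γ A → RFoc Γ (PProp.or A B)
  | orR2 {Γ A B} : RFoc Γ B → RFoc Γ (PProp.or A B)
  | topR {Γ} : RFoc Γ PProp.top
  | andR {Γ A B} : RFoc Γ A → RFoc Γ B → RFoc Γ (PProp.and A B)
/-- Inversion: Γ ; Ω ⊢ U -/
inductive Inv : Ctx → List PProp → Succ → Prop
  | focR {Γ A} : RFoc Γ A → Inv Γ [] (Succ.pos A)
  | focL {Γ A U} : Hyp.neg A ∈ Γ → Succ.stable U → LFoc Γ A U → Inv Γ [] U
  | etaP {Γ p Ω U} : Inv (Hyp.susp (PProp.atom p) :: Γ) Ω U → Inv Γ (PProp.atom p :: Ω) U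
  | downL {Γ A Ω U} : Inv (Hyp.neg A :: Γ) Ω U → Inv Γ (PProp.down A :: Ω) U
  | botL {Γ Ω U} : Inv Γ (PProp.bot :: Ω) U
  | orL {Γ A B Ω U} : Inv Γ (A :: Ω) U → Inv Γ (B :: Ω) U → Inv Γ (PProp.or A B :: Ω) U
  | topPL {Γ Ω U} : Inv Γ Ω U → Inv Γ (PProp.top :: Ω) U
  | andPL {Γ A B Ω U} : Inv Γ (A :: B :: Ω) U → Inv Γ (PProp.and A B :: Ω) U
  | etaN {Γ p} : Inv Γ [] (Succ.susp (NProp.atom p)) → Inv Γ [] (Succ.neg (NProp.atom p))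
  | upR {Γ A} : Inv Γ [] (Succ.pos A) → Inv Γ [] (Succ.neg (NProp.up A))
  | impR {Γ A B} : Inv Γ [A] (Succ.neg B) → Inv Γ [] (Succ.neg (NProp.imp A B))
  | topNR {Γ} : Inv Γ [] (Succ.neg NProp.top)
  | andNR {Γ A B} : Inv Γ [] (Succ.neg A) → Inv Γ [] (Succ.neg B) →
      Inv Γ [] (Succ.neg (NProp.and A B))
/-- Left focus: Γ ; [A⁻] ⊢ U -/
inductive LFoc : Ctx → NProp → Succ → Prop
  | idN {Γ A} : LFoc Γ A (Succ.susp A)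
  | upL {Γ A U} : Inv Γ [A] U → LFoc Γ (NProp.up A) U
  | impL {Γ A B U} : RFoc Γ A → LFoc Γ B U → LFoc Γ (NProp.imp A B) U
  | andL1 {Γ A B U} : LFoc Γ A U → LFoc Γ (NProp.and A B) U
  | andL2 {Γ A B U} : LFoc Γ B U → LFoc Γ (NProp.and A B) U
end

/- Unpolarized propositions and Kleene's G3 -/
inductive UProp : Type
  | atom : Nat → UProp
  | bot  : UProp
  | or   : UProp → UProp → UProp
  | top  : UProp
  | and  : UProp → UProp → UProp
  | imp  : UProp → UProp → UProp

inductive G3 : List UProp → UProp → Prop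
  | init {Γ p} : UProp.atom p ∈ Γ → G3 Γ (UProp.atom p)
  | botL {Γ Q} : UProp.bot ∈ Γ → G3 Γ Q
  | orR1 {Γ A B} : G3 Γ A → G3 Γ (UProp.or A B)
  | orR2 {Γ A B} : G3 Γ B → G3 Γ (UProp.or A B)
  | orL {Γ A B Q} : UProp.or A B ∈ Γ → G3 (A :: Γ) Q → G3 (B :: Γ) Q → G3 Γ Q
  | topR {Γ} : G3 Γ UProp.top
  | andR {Γ A B} : G3 Γ A → G3 Γ B → G3 Γ (UProp.and A B)
  | andL1 {Γ A B Q} : UProp.and A B ∈ Γ → G3 (A :: Γ) Q → G3 Γ Q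
  | andL2 {Γ A B Q} : UProp.and A B ∈ Γ → G3 (B :: Γ) Q → G3 Γ Q
  | impR {Γ A B} : G3 (A :: Γ) B → G3 Γ (UProp.imp A B)
  | impL {Γ A B Q} : UProp.imp A B ∈ Γ → G3 Γ A → G3 (B :: Γ) Q → G3 Γ Q

/-- G3 with an ordered auxiliary context Ψ: Γ; Ψ ⊢ Q -/
inductive G3Psi : List UProp → List UProp → UProp → Prop
  | cons {Γ P Ψ Q} : G3Psi (P :: Γ) Ψ Q → G3Psi Γ (P :: Ψ) Q
  | nil {Γ Q} : G3 Γ Q → G3Psi Γ [] Q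

/- Erasure -/
mutual
def eraseP : PProp → UProp
  | .atom p => .atom p
  | .down A => eraseN A
  | .bot => .bot
  | .or A B => .or (eraseP A) (eraseP B)
  | .top => .top
  | .and A B => .and (eraseP A) (eraseP B)
def eraseN : NProp → UProp
  | .atom p => .atom p
  | .up A => eraseP A
  | .imp A B => .imp (eraseP A) (eraseN B)
  | .top => .top
  | .and A B => .and (eraseN A) (eraseN B)
end

def eraseHyp : Hyp → UProp
  | .neg A => eraseN A
  | .susp A => eraseP A

def eraseCtx (Γ : Ctx) : List UProp := Γ.map eraseHyp

def eraseSucc : Succ → UProp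
  | .pos A => eraseP A
  | .neg A => eraseN A
  | .susp A => eraseN A

/-! Strip the leading `↑↓` shifts of `A⁻`. Erasure ignores shifts, and each stripped shift
is put back by the derivable rule `↑↓L`: focus on `↑↓C⁻`, invert, and weaken. -/

mutual
theorem RFoc.weaken {Γ Γ' : Ctx} {A : PProp} (h : Γ ⊆ Γ') : RFoc Γ A → RFoc Γ' A
  | .idP m => .idP (h m)
  | .downR d => .downR (d.weaken h)
  | .orR1 d => .orR1 (d.weaken h)
  | .orR2 d => .orR2 (d.weaken h)
  | .topR => .topR
  | .andR d e => .andR (d.weaken h) (e.weaken h)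

theorem Inv.weaken {Γ Γ' : Ctx} {Ω : List PProp} {U : Succ} (h : Γ ⊆ Γ') :
    Inv Γ Ω U → Inv Γ' Ω U
  | .focR d => .focR (d.weaken h)
  | .focL m s d => .focL (h m) s (d.weaken h)
  | .etaP d => .etaP (d.weaken (List.cons_subset_cons _ h))
  | .downL d => .downL (d.weaken (List.cons_subset_cons _ h))
  | .botL => .botL
  | .orL d e => .orL (d.weaken h) (e.weaken h)
  | .topPL d => .topPL (d.weaken h)
  | .andPL d => .andPL (d.weaken h)
  | .etaN d => .etaN (d.weaken h)
  | .upR d => .upR (d.weaken h)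
  | .impR d => .impR (d.weaken h)
  | .topNR => .topNR
  | .andNR d e => .andNR (d.weaken h) (e.weaken h)

theorem LFoc.weaken {Γ Γ' : Ctx} {A : NProp} {U : Succ} (h : Γ ⊆ Γ') :
    LFoc Γ A U → LFoc Γ' A U
  | .idN => .idN
  | .upL d => .upL (d.weaken h)
  | .impL d e => .impL (d.weaken h) (e.weaken h)
  | .andL1 d => .andL1 (d.weaken h)
  | .andL2 d => .andL2 (d.weaken h)
end

theorem Inv.upDownL {Γ : Ctx} {C : NProp} {U : Succ} (hU : U.stable)
    (d : Inv (.neg C :: Γ) [] U) : Inv (.neg (.up (.down C)) :: Γ) [] U :=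
  .focL List.mem_cons_self hU <| .upL <| .downL <|
    d.weaken (List.cons_subset_cons _ (List.subset_cons_self _ _))

def stripUpDown : NProp → NProp
  | .up (.down C) => stripUpDown C
  | A => A

theorem stripUpDown_ne_upDown (A C : NProp) : stripUpDown A ≠ .up (.down C) := by
  induction A using stripUpDown.induct with
  | case1 B ih => rwa [stripUpDown]
  | case2 A hA => rw [stripUpDown.eq_2 A hA]; exact hA C

theorem eraseN_stripUpDown (A : NProp) : eraseN (stripUpDown A) = eraseN A := by
  induction A using stripUpDown.induct with
  | case1 B ih => rw [stripUpDown, ih, eraseN, eraseP]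
  | case2 A hA => rw [stripUpDown.eq_2 A hA]

theorem Inv.of_stripUpDown {A : NProp} {Γ : Ctx} {U : Succ} (hU : U.stable)
    (d : Inv (.neg (stripUpDown A) :: Γ) [] U) : Inv (.neg A :: Γ) [] U := by
  induction A using stripUpDown.induct with
  | case1 B ih => rw [stripUpDown] at d; exact Inv.upDownL hU (ih d)
  | case2 A hA => rwa [stripUpDown.eq_2 A hA] at d

/-- Negative shift removal. -/
theorem negative_shift_removal :
    ∀ (A : NProp) (P : UProp), eraseN A = P →
      ∃ B : NProp, (∀ C : NProp, B ≠ NProp.up (PProp.down C)) ∧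
        eraseN B = P ∧
        ∀ (Γ : Ctx) (U : Succ), Succ.stable U →
          Inv (Hyp.neg B :: Γ) [] U → Inv (Hyp.neg A :: Γ) [] U := by
  rintro A P rfl
  exact ⟨stripUpDown A, stripUpDown_ne_upDown A, eraseN_stripUpDown A,
    fun _ _ hU => Inv.of_stripUpDown hU⟩

end StructuralFocalization
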